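/- arXiv:1105.4953 — 2 statements merged into one kernel-verified Lean document; each statement's English description precedes it below -/
import Mathlib

section
/- Let S be a finite set of sites in Euclidean space E and R ⊆ S with |R| > 1. Then the Voronoi cell V(R) (the set of points equidistant to all sites of R and strictly closer to R than to S∖R) is contained in the boundary of the Voronoi slab of each r ∈ R, i.e. V(R) ⊆ ∂{x : |x - r| ≤ |x - s| ∀ s ∈ S} for each r ∈ R. -/
/-!
A point `x` of `V(R)` lies in the slab of `r`, being at the common distance from all of `R` and
farther from every other site. Choosing a second site `r' ∈ R`, the point `x` lies on the bisector
of `r` and `r'`, so pushing it by `t • (r' - r)` with `t > 0` makes it strictly closer to `r'`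
than to `r`, hence takes it out of the slab. Letting `t → 0⁺` exhibits `x` as a limit of points
outside the slab.
-/

open Filter Topology

theorem mem_frontier_of_add_smul_notMem {E : Type*} [AddCommGroup E] [Module ℝ E]
    [TopologicalSpace E] [ContinuousAdd E] [ContinuousSMul ℝ E] {s : Set E} {x : E} (v : E)
    (hx : x ∈ s) (hv : ∀ t : ℝ, 0 < t → x + t • v ∉ s) : x ∈ frontier s := by
  rw [frontier_eq_closure_inter_closure]
  refine ⟨subset_closure hx,
    mem_closure_of_tendsto (f := fun t : ℝ ↦ x + t • v) (b := 𝓝[>] 0) ?_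
      (eventually_nhdsWithin_of_forall hv)⟩
  have : Tendsto (fun t : ℝ ↦ x + t • v) (𝓝 0) (𝓝 (x + (0 : ℝ) • v)) :=
    (continuous_const.add (continuous_id.smul continuous_const)).tendsto 0
  simpa using this.mono_left nhdsWithin_le_nhds

open RealInnerProductSpace in
theorem dist_add_smul_sub_lt_of_dist_eq {E : Type*} [NormedAddCommGroup E]
    [InnerProductSpace ℝ E] {x a b : E} (hab : a ≠ b) (h : dist x a = dist x b) {t : ℝ}
    (ht : 0 < t) : dist (x + t • (b - a)) b < dist (x + t • (b - a)) a := by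
  have hsq :
      dist (x + t • (b - a)) a ^ 2 = dist (x + t • (b - a)) b ^ 2 + 2 * t * ‖b - a‖ ^ 2 := by
    have hinner : ⟪x - a, b - a⟫ - ⟪x - b, b - a⟫ = ‖b - a‖ ^ 2 := by
      rw [← inner_sub_left, sub_sub_sub_cancel_left, real_inner_self_eq_norm_sq]
    simp only [dist_eq_norm] at h ⊢
    rw [add_sub_right_comm, add_sub_right_comm, norm_add_sq_real, norm_add_sq_real, h,
      real_inner_smul_right, real_inner_smul_right]
    linear_combination 2 * t * hinner
  have hpos : 0 < 2 * t * ‖b - a‖ ^ 2 := by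
    have := norm_pos_iff.mpr (sub_ne_zero.mpr hab.symm)
    positivity
  exact (pow_lt_pow_iff_left₀ dist_nonneg dist_nonneg two_ne_zero).mp (by linarith)

theorem voronoi_cell_subset_slab_boundary
    {d : ℕ} (S R : Finset (EuclideanSpace ℝ (Fin d))) (hRS : R ⊆ S)
    (hR : 1 < R.card) (r : EuclideanSpace ℝ (Fin d)) (hr : r ∈ R) :
    {x : EuclideanSpace ℝ (Fin d) |
        (∀ a ∈ R, ∀ b ∈ R, dist x a = dist x b) ∧
        ∀ a ∈ R, ∀ s ∈ S, s ∉ R → dist x a < dist x s} ⊆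
      frontier {x : EuclideanSpace ℝ (Fin d) | ∀ s ∈ S, dist x r ≤ dist x s} := by
  rintro x ⟨hequi, hcloser⟩
  obtain ⟨r', hr', hr'r⟩ := Finset.exists_mem_ne hR r
  refine mem_frontier_of_add_smul_notMem (r' - r) (fun s hs ↦ ?_) fun t ht hslab ↦ ?_
  · by_cases hsR : s ∈ R
    · exact (hequi r hr s hsR).le
    · exact (hcloser r hr s hs hsR).le
  · exact (hslab r' (hRS hr')).not_gt
      (dist_add_smul_sub_lt_of_dist_eq hr'r.symm (hequi r hr r' hr') ht)
end

section
/- Let S be a nonempty finite set of sites in Euclidean space E, x ∈ E∖S, s ∈ S with x ≠ s. If there exists y ∈ V_S({s}) with |y - x| ≤ |y - s| (i.e. V_S({s}) ∩ H(x,s) ≠ ∅), then the bisector cell V_{S∪{x}}({x,s}) is nonempty: there exists a point equidistant from x and s and strictly closer to both than to any other site of S ∪ {x}. -/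
/-!
The function `z ↦ dist z x - dist z s` is `≤ 0` at `y` and `≥ 0` at `s`, so it vanishes at some
`z ∈ [y, s]`. Such a `z` is still strictly closer to `s` than to every other site: the triangle
inequality through `z` turns `dist y s < dist y t` into `dist z s < dist z t`.
-/

open scoped Convex

section

variable {E : Type*} [SeminormedAddCommGroup E] [NormedSpace ℝ E]

theorem exists_mem_segment_dist_eq_dist {x y s : E} (h : dist y x ≤ dist y s) :
    ∃ z ∈ [y -[ℝ] s], dist z x = dist z s :=
  (convex_segment y s).isPreconnected.intermediate_value₂ (left_mem_segment ℝ y s)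
    (right_mem_segment ℝ y s) (continuous_id.dist continuous_const).continuousOn
    (continuous_id.dist continuous_const).continuousOn h (by simp)

theorem dist_lt_dist_of_mem_segment {y s t z : E} (hz : z ∈ [y -[ℝ] s])
    (h : dist y s < dist y t) : dist z s < dist z t := by
  have hsplit := dist_add_dist_of_mem_segment hz
  have htri := dist_triangle y z t
  linarith

end

theorem halfspace_meets_implies_bisector_cell_nonempty_general
    {d : ℕ} (S : Finset (EuclideanSpace ℝ (Fin d)))
    (x s : EuclideanSpace ℝ (Fin d))
    (y : EuclideanSpace ℝ (Fin d))
    (hy : ∀ t ∈ S, t ≠ s → dist y s < dist y t)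
    (hyH : dist y x ≤ dist y s) :
    ∃ z : EuclideanSpace ℝ (Fin d),
      dist z x = dist z s ∧ ∀ t ∈ S, t ≠ s → dist z s < dist z t := by
  obtain ⟨z, hz, hzx⟩ := exists_mem_segment_dist_eq_dist hyH
  exact ⟨z, hzx, fun t ht hts => dist_lt_dist_of_mem_segment hz (hy t ht hts)⟩

theorem halfspace_meets_implies_bisector_cell_nonempty
    {d : ℕ} (S : Finset (EuclideanSpace ℝ (Fin d))) (hS : S.Nonempty)
    (x s : EuclideanSpace ℝ (Fin d)) (hx : x ∉ S) (hs : s ∈ S) (hxs : x ≠ s)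
    (y : EuclideanSpace ℝ (Fin d))
    (hy : ∀ t ∈ S, t ≠ s → dist y s < dist y t)
    (hyH : dist y x ≤ dist y s) :
    ∃ z : EuclideanSpace ℝ (Fin d),
      dist z x = dist z s ∧ ∀ t ∈ S, t ≠ s → dist z s < dist z t :=
  halfspace_meets_implies_bisector_cell_nonempty_general S x s y hy hyH
end
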